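/- Every graph Sₙ in the sequence defined by S₁ = K₁ and Sₙ = s(Sₙ₋₁) is chordal and P₆-free. -/

import Mathlib

namespace Awesome

open SimpleGraph

/-- Independence number of the subgraph of `G` induced by `S`. -/
noncomputable def indepNumOn {V : Type*} (G : SimpleGraph V) (S : Set V) : ℕ :=
  sSup {k | ∃ T : Finset V, ↑T ⊆ S ∧ (∀ u ∈ T, ∀ v ∈ T, ¬ G.Adj u v) ∧ T.card = k}

/-- `H` is isomorphic to an induced subgraph of `G`. -/
def ContainsInduced {W V : Type*} (H : SimpleGraph W) (G : SimpleGraph V) : Prop :=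
  ∃ S : Set V, Nonempty (H ≃g G.induce S)

/-- A path decomposition of `G`: a sequence of bags covering all vertices and edges,
with each vertex appearing in a contiguous interval of bags. -/
structure PathDecomp {V : Type*} (G : SimpleGraph V) where
  n : ℕ
  bag : Fin n → Set V
  covers_vertex : ∀ v, ∃ i, v ∈ bag i
  covers_edge : ∀ ⦃u v⦄, G.Adj u v → ∃ i, u ∈ bag i ∧ v ∈ bag i
  interval : ∀ (v : V) (i j k : Fin n), i ≤ j → j ≤ k → v ∈ bag i → v ∈ bag k → v ∈ bag j

/-- Width of a path decomposition: the maximum bag size. -/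
noncomputable def PathDecomp.width {V : Type*} {G : SimpleGraph V} (D : PathDecomp G) : ℕ :=
  Finset.univ.sup fun i => (D.bag i).ncard

/-- α-width of a path decomposition: the maximum independence number of a bag. -/
noncomputable def PathDecomp.alphaWidth {V : Type*} {G : SimpleGraph V} (D : PathDecomp G) : ℕ :=
  Finset.univ.sup fun i => indepNumOn G (D.bag i)

/-- Pathwidth (defined as maximum bag size, i.e. the usual pathwidth plus one). -/
noncomputable def pathwidth {V : Type*} (G : SimpleGraph V) : ℕ :=
  sInf {w | ∃ D : PathDecomp G, D.width = w}

/-- α-pathwidth (path-independence number). -/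
noncomputable def alphaPathwidth {V : Type*} (G : SimpleGraph V) : ℕ :=
  sInf {w | ∃ D : PathDecomp G, D.alphaWidth = w}

/-- A tree decomposition of `G`. -/
structure TreeDecomp {V : Type*} (G : SimpleGraph V) where
  ι : Type
  fintype_ι : Fintype ι
  T : SimpleGraph ι
  connected : T.Connected
  acyclic : T.IsAcyclic
  bag : ι → Set V
  covers_vertex : ∀ v, ∃ i, v ∈ bag i
  covers_edge : ∀ ⦃u v⦄, G.Adj u v → ∃ i, u ∈ bag i ∧ v ∈ bag i
  coherent : ∀ v : V, (T.induce {i | v ∈ bag i}).Connected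

/-- Width of a tree decomposition: maximum bag size. -/
noncomputable def TreeDecomp.width {V : Type*} {G : SimpleGraph V} (D : TreeDecomp G) : ℕ :=
  letI := D.fintype_ι
  Finset.univ.sup fun i => (D.bag i).ncard

/-- α-width of a tree decomposition: maximum independence number of a bag. -/
noncomputable def TreeDecomp.alphaWidth {V : Type*} {G : SimpleGraph V} (D : TreeDecomp G) : ℕ :=
  letI := D.fintype_ι
  Finset.univ.sup fun i => indepNumOn G (D.bag i)

/-- Treewidth (defined as maximum bag size, i.e. the usual treewidth plus one). -/
noncomputable def treewidth {V : Type*} (G : SimpleGraph V) : ℕ :=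
  sInf {w | ∃ D : TreeDecomp G, D.width = w}

/-- α-treewidth (tree-independence number). -/
noncomputable def alphaTreewidth {V : Type*} (G : SimpleGraph V) : ℕ :=
  sInf {w | ∃ D : TreeDecomp G, D.alphaWidth = w}

/-- A treedepth decomposition of `G`, encoded as a forest order: a partial order in which
the set of ancestors of every vertex is a chain, and every edge of `G` joins two
comparable vertices. -/
structure TreedepthDecomp {V : Type*} (G : SimpleGraph V) where
  le : V → V → Prop
  le_refl : ∀ v, le v v
  le_trans : ∀ {u v w}, le u v → le v w → le u w
  le_antisymm : ∀ {u v}, le u v → le v u → u = v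
  ancestors_chain : ∀ (v : V) {a b : V}, le a v → le b v → le a b ∨ le b a
  covers : ∀ ⦃u v⦄, G.Adj u v → le u v ∨ le v u

/-- Depth of a treedepth decomposition: the maximum number of vertices on a
root-to-leaf path, i.e. the maximum number of ancestors of a vertex (itself included). -/
noncomputable def TreedepthDecomp.depth {V : Type*} {G : SimpleGraph V}
    (D : TreedepthDecomp G) : ℕ :=
  ⨆ v : V, ({u | D.le u v} : Set V).ncard

/-- Treedepth. -/
noncomputable def treedepth {V : Type*} (G : SimpleGraph V) : ℕ :=
  sInf {d | ∃ D : TreedepthDecomp G, D.depth = d}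

/-- A vertex cover. -/
def IsVertexCover {V : Type*} (G : SimpleGraph V) (S : Set V) : Prop :=
  ∀ ⦃u v⦄, G.Adj u v → u ∈ S ∨ v ∈ S

/-- Vertex cover number. -/
noncomputable def vcNum {V : Type*} (G : SimpleGraph V) : ℕ :=
  sInf {k | ∃ S : Set V, IsVertexCover G S ∧ S.ncard = k}

/-- Every graph on `n` vertices has a clique of size `a` or an independent set of size `b`. -/
def RamseyProp (n a b : ℕ) : Prop :=
  ∀ G : SimpleGraph (Fin n),
    (∃ s : Finset (Fin n), G.IsNClique a s) ∨ (∃ s : Finset (Fin n), Gᶜ.IsNClique b s)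

/-- The Ramsey number `R(a,b)`: the least `n` such that every graph on at least `n`
vertices contains a clique of size `a` or an independent set of size `b`. -/
noncomputable def ramsey (a b : ℕ) : ℕ :=
  sInf {n | ∀ m, n ≤ m → RamseyProp m a b}

/-- The s-claw substitution of `G`: three disjoint copies of `G`, vertices `v₁ v₂ v₃`
(each complete to one copy), and a vertex `w` adjacent exactly to `v₁, v₂, v₃`. -/
def sClaw {V : Type*} (G : SimpleGraph V) :
    SimpleGraph ((Fin 3 × V) ⊕ (Fin 3 ⊕ Unit)) :=
  SimpleGraph.fromRel fun a b =>
    match a, b with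
    | Sum.inl (i, u), Sum.inl (j, v) => i = j ∧ G.Adj u v
    | Sum.inl (i, _), Sum.inr (Sum.inl j) => i = j
    | Sum.inr (Sum.inl _), Sum.inr (Sum.inr _) => True
    | _, _ => False

/-- Vertex type of the iterated s-claw substitution sequence. -/
def SType : ℕ → Type
  | 0 => Unit
  | n + 1 => (Fin 3 × SType n) ⊕ (Fin 3 ⊕ Unit)

/-- `Sgraph 0 = K₁` and `Sgraph (n+1) = sClaw (Sgraph n)`; so the paper's `Sₙ` is `Sgraph (n-1)`. -/
def Sgraph : (n : ℕ) → SimpleGraph (SType n)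
  | 0 => ⊥
  | n + 1 => sClaw (Sgraph n)

/-- A graph parameter: a map assigning a natural number to every graph. -/
abbrev GraphParam := ∀ {V : Type}, SimpleGraph V → ℕ

/-- `S` is a `(ρ,c)`-modulator of `G`: `ρ (G − S) ≤ c`. -/
def IsModulator (ρ : GraphParam) (c : ℕ) {V : Type} (G : SimpleGraph V) (S : Set V) : Prop :=
  ρ (G.induce Sᶜ) ≤ c

/-- The `(ρ,c)`-modulator number: minimum size of a `(ρ,c)`-modulator. -/
noncomputable def modNum (ρ : GraphParam) (c : ℕ) {V : Type} (G : SimpleGraph V) : ℕ :=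
  sInf {k | ∃ S : Set V, IsModulator ρ c G S ∧ S.ncard = k}

/-- The disjoint union of `n` edges. -/
def nK2 (n : ℕ) : SimpleGraph (Fin n × Fin 2) :=
  SimpleGraph.fromRel fun a b => a.1 = b.1 ∧ a.2 ≠ b.2

/-- The disjoint union of `k` copies of the complete graph on `N` vertices. -/
def unionComplete (k N : ℕ) : SimpleGraph (Fin k × Fin N) :=
  SimpleGraph.fromRel fun a b => a.1 = b.1


section Aux
open SimpleGraph

def vcomp {V : Type*} : (Fin 3 × V) ⊕ (Fin 3 ⊕ Unit) → Option (Fin 3)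
  | Sum.inl (i, _) => some i
  | Sum.inr (Sum.inl i) => some i
  | Sum.inr (Sum.inr _) => none

variable {V : Type*} {G : SimpleGraph V}

lemma adj_w {x} (h : (sClaw G).Adj (Sum.inr (Sum.inr ())) x) :
    ∃ i, x = Sum.inr (Sum.inl i) := by
  rcases x with ⟨i, u⟩ | i | t <;> simp [sClaw, fromRel_adj] at h ⊢

lemma adj_v {i : Fin 3} {x} (h : (sClaw G).Adj (Sum.inr (Sum.inl i)) x) :
    x = Sum.inr (Sum.inr ()) ∨ ∃ u, x = Sum.inl (i, u) := by
  rcases x with ⟨j, u⟩ | j | t <;> simp [sClaw, fromRel_adj] at h ⊢ <;> try exact h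

lemma adj_copy {i : Fin 3} {u : V} {x} (h : (sClaw G).Adj (Sum.inl (i, u)) x) :
    (∃ u', x = Sum.inl (i, u') ∧ G.Adj u u') ∨ x = Sum.inr (Sum.inl i) := by
  rcases x with ⟨j, v⟩ | j | t <;> simp [sClaw, fromRel_adj] at h ⊢
  · rcases h.2 with ⟨rfl, ha⟩ | ⟨rfl, ha⟩
    exacts [⟨rfl, ha⟩, ⟨rfl, ha.symm⟩]
  · exact h.symm

lemma adj_v_copy (i : Fin 3) (u : V) :
    (sClaw G).Adj (Sum.inr (Sum.inl i)) (Sum.inl (i, u)) := by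
  simp [sClaw, fromRel_adj]

lemma adj_copy_iff {i j : Fin 3} {u v : V} :
    (sClaw G).Adj (Sum.inl (i, u)) (Sum.inl (j, v)) ↔ i = j ∧ G.Adj u v := by
  constructor
  · intro h
    rcases adj_copy h with ⟨u', huv, ha⟩ | h'
    · cases huv; exact ⟨rfl, ha⟩
    · simp at h'
  · rintro ⟨rfl, h⟩
    simp [sClaw, fromRel_adj]
    exact ⟨fun hu => (h.ne hu).elim, Or.inl h⟩

lemma vcomp_adj {x y} (h : (sClaw G).Adj x y)
    (hx : x ≠ Sum.inr (Sum.inr ())) (hy : y ≠ Sum.inr (Sum.inr ())) :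
    vcomp x = vcomp y := by
  rcases x with ⟨i, u⟩ | i | t
  · rcases adj_copy h with ⟨u', rfl, -⟩ | rfl <;> rfl
  · rcases adj_v h with rfl | ⟨u, rfl⟩
    · exact absurd rfl hy
    · rfl
  · exact absurd rfl hx


lemma containsInduced_iff {W V : Type*} {H : SimpleGraph W} {G : SimpleGraph V} :
    ContainsInduced H G ↔ ∃ f : W → V, Function.Injective f ∧
      ∀ a b, H.Adj a b ↔ G.Adj (f a) (f b) := by
  constructor
  · rintro ⟨S, ⟨e⟩⟩
    refine ⟨fun a => (e a : V), fun a b h => e.toEquiv.injective (Subtype.ext h), fun a b => ?_⟩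
    rw [← e.map_rel_iff]
    simp [comap_adj]
  · rintro ⟨f, hf, hadj⟩
    refine ⟨Set.range f, ⟨⟨Equiv.ofInjective f hf, fun {a b} => ?_⟩⟩⟩
    simp [Equiv.ofInjective, (hadj a b).symm, comap_adj]

lemma p6_sClaw (hG : ¬ ContainsInduced (pathGraph 6) G) :
    ¬ ContainsInduced (pathGraph 6) (sClaw G) := by
  rw [containsInduced_iff]
  rintro ⟨f, hinj, hiff⟩
  have hiff' : ∀ a b : Fin 6, (a.val + 1 = b.val ∨ b.val + 1 = a.val) ↔
      (sClaw G).Adj (f a) (f b) := by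
    intro a b; rw [← pathGraph_adj]; exact hiff a b
  by_cases hw : ∃ a, f a = Sum.inr (Sum.inr ())
  · obtain ⟨a, hfa⟩ := hw
    obtain ⟨p, q, r, h1, h2, h3, h4, hqa, hra, hrp⟩ :
        ∃ p q r : Fin 6, (a.val+1 = p.val ∨ p.val+1 = a.val) ∧
          (p.val+1 = q.val ∨ q.val+1 = p.val) ∧
          (q.val+1 = r.val ∨ r.val+1 = q.val) ∧
          ¬(p.val+1 = r.val ∨ r.val+1 = p.val) ∧ q ≠ a ∧ r ≠ a ∧ r ≠ p := by
      clear hfa; revert a; decide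
    obtain ⟨i, hp⟩ := adj_w (hfa ▸ (hiff' a p).mp h1)
    have h2' := (hiff' p q).mp h2
    rw [hp] at h2'
    rcases adj_v h2' with hq | ⟨u, hq⟩
    · exact hqa (hinj (hq.trans hfa.symm))
    have h3' := (hiff' q r).mp h3
    rw [hq] at h3'
    rcases adj_copy h3' with ⟨u', hr, -⟩ | hr
    · exact h4 ((hiff' p r).mpr (by rw [hp, hr]; exact adj_v_copy i u'))
    · exact hrp (hinj (hr.trans hp.symm))
  · push_neg at hw
    have step : ∀ b c : Fin 6, b.val + 1 = c.val → vcomp (f b) = vcomp (f c) := fun b c h =>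
      vcomp_adj ((hiff' b c).mp (Or.inl h)) (hw b) (hw c)
    have e01 := step 0 1 (by decide)
    have e12 := step 1 2 (by decide)
    have e23 := step 2 3 (by decide)
    have e34 := step 3 4 (by decide)
    have e45 := step 4 5 (by decide)
    have hchain : ∀ b : Fin 6, vcomp (f b) = vcomp (f 0) := by
      intro b
      fin_cases b
      exacts [rfl, e01.symm, (e01.trans e12).symm, ((e01.trans e12).trans e23).symm,
        (((e01.trans e12).trans e23).trans e34).symm,
        ((((e01.trans e12).trans e23).trans e34).trans e45).symm]
    by_cases hv : ∃ a j, f a = Sum.inr (Sum.inl j)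
    · obtain ⟨a, j, hfa⟩ := hv
      obtain ⟨b, hnadj, hba⟩ : ∃ b : Fin 6, ¬(a.val+1 = b.val ∨ b.val+1 = a.val) ∧ b ≠ a := by
        clear hfa; revert a; decide
      have hcb : vcomp (f b) = some j := by rw [hchain b, ← hchain a, hfa]; rfl
      rcases hfb : f b with ⟨k, u⟩ | k | t
      · rw [hfb] at hcb
        obtain rfl : k = j := by simpa [vcomp] using hcb
        exact hnadj ((hiff' a b).mpr (by rw [hfa, hfb]; exact adj_v_copy k u))
      · rw [hfb] at hcb
        obtain rfl : k = j := by simpa [vcomp] using hcb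
        exact hba (hinj (hfb.trans hfa.symm))
      · exact hw b (by rw [hfb])
    · push_neg at hv
      obtain ⟨i, u0, hf0⟩ : ∃ i u0, f 0 = Sum.inl (i, u0) := by
        rcases h0 : f 0 with ⟨i, u⟩ | k | t
        · exact ⟨i, u, rfl⟩
        · exact absurd h0 (hv 0 k)
        · exact absurd h0 (hw 0)
      have hcopy : ∀ b : Fin 6, ∃ u, f b = Sum.inl (i, u) := by
        intro b
        rcases hb : f b with ⟨k, u⟩ | k | t
        · have : vcomp (f b) = some i := by rw [hchain b, hf0]; rfl
          rw [hb] at this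
          obtain rfl : k = i := by simpa [vcomp] using this
          exact ⟨u, rfl⟩
        · exact absurd hb (hv b k)
        · exact absurd hb (hw b)
      choose g hg using hcopy
      apply hG
      rw [containsInduced_iff]
      refine ⟨g, fun a b h => hinj (by rw [hg a, hg b, h]), fun a b => ?_⟩
      rw [hiff a b, hg a, hg b, adj_copy_iff]
      simp

open Fin.CommRing in
lemma cycle_sClaw (hG : ∀ m, 4 ≤ m → ¬ ContainsInduced (cycleGraph m) G)
    (m : ℕ) (hm : 4 ≤ m) : ¬ ContainsInduced (cycleGraph m) (sClaw G) := by
  obtain ⟨m', rfl⟩ : ∃ m', m = m' + 4 := ⟨m - 4, by omega⟩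
  rw [containsInduced_iff]
  rintro ⟨f, hinj, hiff⟩
  have hiff' : ∀ a b : Fin (m' + 4), (a - b = 1 ∨ b - a = 1) ↔
      (sClaw G).Adj (f a) (f b) := by
    intro a b; rw [← cycleGraph_adj]; exact hiff a b
  have hcast : ∀ s : ℕ, 1 ≤ s → s ≤ m' + 3 → ((s : Fin (m' + 4)) ≠ 0) := by
    intro s h1 h2 h
    rw [Fin.natCast_eq_zero] at h
    have := Nat.le_of_dvd (by omega) h
    omega
  have hs : ∀ s : ℕ, 1 ≤ s → s ≤ m' + 3 → ∀ a : Fin (m' + 4),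
      a + (s : Fin (m' + 4)) ≠ a := by
    intro s h1 h2 a h
    exact hcast s h1 h2 (add_left_cancel (show a + (s : Fin (m' + 4)) = a + 0 by
      rw [add_zero]; exact h))
  by_cases hw : ∃ a, f a = Sum.inr (Sum.inr ())
  · obtain ⟨a, hfa⟩ := hw
    have hm3 : ((m' + 3 : ℕ) : Fin (m' + 4)) = -1 := by
      apply eq_neg_of_add_eq_zero_left
      have : ((m' + 3 : ℕ) : Fin (m' + 4)) + 1 = ((m' + 4 : ℕ) : Fin (m' + 4)) := by
        push_cast; ring
      rw [this, Fin.natCast_self]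
    have hadj1 : (sClaw G).Adj (f a) (f (a + 1)) :=
      (hiff' a (a + 1)).mp (Or.inr (by ring))
    obtain ⟨j, hp1⟩ := adj_w (hfa ▸ hadj1)
    have hadjm : (sClaw G).Adj (f a) (f (a - 1)) :=
      (hiff' a (a - 1)).mp (Or.inl (by ring))
    obtain ⟨i, hm1⟩ := adj_w (hfa ▸ hadjm)
    have hne2 : a + 1 ≠ a - 1 := by
      intro h
      apply hs 2 (by omega) (by omega) a
      have h2 : ((2 : ℕ) : Fin (m' + 4)) = 1 + 1 := by push_cast; ring
      rw [h2, ← add_assoc, h]; ring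
    have hij : i ≠ j := by
      intro h
      apply hne2
      apply hinj
      rw [hp1, hm1, h]
    have hwalk : ∀ t : ℕ, 1 ≤ t → t ≤ m' + 3 →
        vcomp (f (a + (t : Fin (m' + 4)))) = vcomp (f (a + 1)) := by
      intro t
      induction t with
      | zero => omega
      | succ t ih =>
        intro h1 h2
        rcases Nat.lt_or_ge 1 (t + 1) with h | h
        · have ht1 : 1 ≤ t := by omega
          have ht2 : t ≤ m' + 3 := by omega
          have hcasteq : ((t + 1 : ℕ) : Fin (m' + 4)) = (t : Fin (m' + 4)) + 1 := by
            push_cast; ring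
          have hadj : (sClaw G).Adj (f (a + ((t : ℕ) : Fin (m' + 4))))
              (f (a + ((t + 1 : ℕ) : Fin (m' + 4)))) := by
            apply (hiff' _ _).mp
            right
            rw [hcasteq]; ring
          have hne1 : f (a + ((t : ℕ) : Fin (m' + 4))) ≠ Sum.inr (Sum.inr ()) :=
            fun h => hs t ht1 ht2 a (hinj (h.trans hfa.symm))
          have hne1' : f (a + ((t + 1 : ℕ) : Fin (m' + 4))) ≠ Sum.inr (Sum.inr ()) :=
            fun h => hs (t + 1) h1 h2 a (hinj (h.trans hfa.symm))
          exact (vcomp_adj hadj hne1 hne1').symm.trans (ih ht1 ht2)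
        · obtain rfl : t = 0 := by omega
          norm_num
    have hfinal := hwalk (m' + 3) (by omega) le_rfl
    rw [show a + ((m' + 3 : ℕ) : Fin (m' + 4)) = a - 1 by rw [hm3]; ring, hm1, hp1] at hfinal
    exact hij (by simpa [vcomp] using hfinal)
  · push_neg at hw
    have step : ∀ t : ℕ, t ≤ m' + 3 → vcomp (f (t : Fin (m' + 4))) = vcomp (f 0) := by
      intro t
      induction t with
      | zero => intro _; norm_num
      | succ t ih =>
        intro h
        have hcasteq : ((t + 1 : ℕ) : Fin (m' + 4)) = (t : Fin (m' + 4)) + 1 := by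
          push_cast; ring
        have hadj : (sClaw G).Adj (f ((t : ℕ) : Fin (m' + 4)))
            (f ((t + 1 : ℕ) : Fin (m' + 4))) := by
          apply (hiff' _ _).mp
          right
          rw [hcasteq]; ring
        exact (vcomp_adj hadj (hw _) (hw _)).symm.trans (ih (by omega))
    have hchain : ∀ b : Fin (m' + 4), vcomp (f b) = vcomp (f 0) := by
      intro b
      have hb := b.isLt
      have := step b.val (by omega)
      rwa [Fin.cast_val_eq_self] at this
    have h2ne1 : ((2 : ℕ) : Fin (m' + 4)) ≠ 1 := by
      intro h
      apply hcast 1 (by omega) (by omega)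
      calc ((1 : ℕ) : Fin (m' + 4)) = ((2 : ℕ) : Fin (m' + 4)) - 1 := by push_cast; ring
        _ = 0 := by rw [h]; ring
    have hneg : -((2 : ℕ) : Fin (m' + 4)) ≠ 1 := by
      intro h
      apply hcast 3 (by omega) (by omega)
      calc ((3 : ℕ) : Fin (m' + 4)) = 1 + ((2 : ℕ) : Fin (m' + 4)) := by push_cast; ring
        _ = -((2 : ℕ) : Fin (m' + 4)) + ((2 : ℕ) : Fin (m' + 4)) := by rw [← h]
        _ = 0 := by ring
    by_cases hv : ∃ a j, f a = Sum.inr (Sum.inl j)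
    · obtain ⟨a, j, hfa⟩ := hv
      have hba : a + ((2 : ℕ) : Fin (m' + 4)) ≠ a := hs 2 (by omega) (by omega) a
      have hnadj : ¬(a - (a + ((2 : ℕ) : Fin (m' + 4))) = 1 ∨
          (a + ((2 : ℕ) : Fin (m' + 4))) - a = 1) := by
        rintro (h | h)
        · exact hneg (by rw [← h]; ring)
        · exact h2ne1 (by rw [← h]; ring)
      have hcb : vcomp (f (a + ((2 : ℕ) : Fin (m' + 4)))) = some j := by
        rw [hchain _, ← hchain a, hfa]; rfl
      rcases hfb : f (a + ((2 : ℕ) : Fin (m' + 4))) with ⟨k, u⟩ | k | t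
      · rw [hfb] at hcb
        obtain rfl : k = j := by simpa [vcomp] using hcb
        exact hnadj ((hiff' a _).mpr (by rw [hfa, hfb]; exact adj_v_copy k u))
      · rw [hfb] at hcb
        obtain rfl : k = j := by simpa [vcomp] using hcb
        exact hba (hinj (hfb.trans hfa.symm))
      · exact hw _ (by rw [hfb])
    · push_neg at hv
      obtain ⟨i, u0, hf0⟩ : ∃ i u0, f 0 = Sum.inl (i, u0) := by
        rcases h0 : f 0 with ⟨i, u⟩ | k | t
        · exact ⟨i, u, rfl⟩
        · exact absurd h0 (hv 0 k)
        · exact absurd h0 (hw 0)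
      have hcopy : ∀ b : Fin (m' + 4), ∃ u, f b = Sum.inl (i, u) := by
        intro b
        rcases hb : f b with ⟨k, u⟩ | k | t
        · have hck : vcomp (f b) = some i := by rw [hchain b, hf0]; rfl
          rw [hb] at hck
          obtain rfl : k = i := by simpa [vcomp] using hck
          exact ⟨u, rfl⟩
        · exact absurd hb (hv b k)
        · exact absurd hb (hw b)
      choose g hg using hcopy
      apply hG (m' + 4) (by omega)
      rw [containsInduced_iff]
      refine ⟨g, fun a b h => hinj (by rw [hg a, hg b, h]), fun a b => ?_⟩
      rw [hiff a b, hg a, hg b, adj_copy_iff]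
      simp


lemma key_chordal_p6 : ∀ k, (∀ m, 4 ≤ m → ¬ ContainsInduced (cycleGraph m) (Sgraph k)) ∧
    ¬ ContainsInduced (pathGraph 6) (Sgraph k) := by
  intro k
  induction k with
  | zero =>
    letI : Subsingleton (SType 0) := inferInstanceAs (Subsingleton Unit)
    constructor
    · intro m hm h
      rw [containsInduced_iff] at h
      obtain ⟨f, hinj, -⟩ := h
      have h01 : f ⟨0, by omega⟩ = f ⟨1, by omega⟩ := Subsingleton.elim _ _
      have := hinj h01
      simp [Fin.ext_iff] at this
    · intro h
      rw [containsInduced_iff] at h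
      obtain ⟨f, hinj, -⟩ := h
      have h01 : f 0 = f 1 := Subsingleton.elim _ _
      have := hinj h01
      simp [Fin.ext_iff] at this
  | succ k ih =>
    exact ⟨cycle_sClaw ih.1, p6_sClaw ih.2⟩

end Aux

theorem stmt8 (n : ℕ) (hn : 1 ≤ n) :
    (∀ m : ℕ, 4 ≤ m → ¬ ContainsInduced (cycleGraph m) (Sgraph (n - 1))) ∧
    ¬ ContainsInduced (pathGraph 6) (Sgraph (n - 1)) := key_chordal_p6 (n - 1)
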